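/- Let s > 1 and ε > 0 be real numbers, and define a_ℓ = 1 / (ℓ^{s + 1/2} · log ℓ) for integers ℓ ≥ 2. Then: (i) ∑_{ℓ=2}^∞ (1 + ℓ^{2s}) · a_ℓ² < ∞; and (ii) for every real c > 0, the series ∑_{ℓ=2}^∞ ℓ^{2(s+2+ε)} · a_ℓ² · (1 + c·ℓ(ℓ+1))^{−2} diverges to +∞. -/
import Mathlib

open Filter

private lemma summable_of_eventually_le {f g : ℕ → ℝ} (hf : ∀ n, 0 ≤ f n)
    (h : ∀ᶠ n in atTop, f n ≤ g n) (hg : Summable g) : Summable f := by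
  refine summable_of_isBigO_nat hg (Asymptotics.IsBigO.of_bound 1 ?_)
  filter_upwards [h] with n hn
  rw [one_mul, Real.norm_eq_abs, Real.norm_eq_abs, abs_of_nonneg (hf n)]
  exact hn.trans (le_abs_self _)

private lemma bertrand_summable :
    Summable (fun n : ℕ => (((n : ℝ) + 2) * Real.log ((n : ℝ) + 2) ^ 2)⁻¹) := by
  set g : ℕ → ℝ := fun n => (((n : ℝ) + 2) * Real.log ((n : ℝ) + 2) ^ 2)⁻¹ with hg
  have hpos : ∀ n : ℕ, 0 < ((n : ℝ) + 2) * Real.log ((n : ℝ) + 2) ^ 2 := by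
    intro n
    have h0 : (0 : ℝ) ≤ (n : ℝ) := Nat.cast_nonneg n
    have h1 : (1 : ℝ) < (n : ℝ) + 2 := by linarith
    have := Real.log_pos h1
    positivity
  have h_nonneg : ∀ n, 0 ≤ g n := fun n => (inv_pos.mpr (hpos n)).le
  have h_mono : ∀ ⦃m n : ℕ⦄, 0 < m → m ≤ n → g n ≤ g m := by
    intro m n _ hmn
    refine inv_anti₀ (hpos m) ?_
    have hm0 : (0 : ℝ) ≤ (m : ℝ) := Nat.cast_nonneg m
    have hmn' : ((m : ℝ) + 2) ≤ (n : ℝ) + 2 := by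
      have := (Nat.cast_le (α := ℝ)).mpr hmn; linarith
    have hlog : Real.log ((m : ℝ) + 2) ≤ Real.log ((n : ℝ) + 2) :=
      Real.log_le_log (by positivity) hmn'
    have hlognn : 0 ≤ Real.log ((m : ℝ) + 2) := Real.log_nonneg (by linarith)
    exact mul_le_mul hmn' (pow_le_pow_left₀ hlognn hlog 2) (by positivity) (by positivity)
  rw [← summable_condensed_iff_of_nonneg h_nonneg h_mono]
  have hsum2 : Summable (fun k : ℕ => (Real.log 2)⁻¹ ^ 2 * ((k : ℝ) ^ 2)⁻¹) := by
    refine Summable.mul_left _ ?_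
    simpa [one_div] using Real.summable_one_div_nat_pow.mpr (le_refl 2)
  refine summable_of_eventually_le (fun k => by positivity) ?_ hsum2
  filter_upwards [eventually_ge_atTop 1] with k hk
  have hkpos : (0 : ℝ) < k := by exact_mod_cast hk
  have hlog2 : (0 : ℝ) < Real.log 2 := Real.log_pos one_lt_two
  have h2k : (1 : ℝ) ≤ (2 : ℝ) ^ k := one_le_pow₀ one_le_two
  have hle : (k : ℝ) * Real.log 2 ≤ Real.log ((2 : ℝ) ^ k + 2) := by
    calc (k : ℝ) * Real.log 2 = Real.log ((2 : ℝ) ^ k) := by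
          rw [Real.log_pow]
      _ ≤ _ := Real.log_le_log (by positivity) (by linarith)
  have hklog : (0 : ℝ) < (k : ℝ) * Real.log 2 := by positivity
  have hgb : g (2 ^ k) ≤ (((2:ℝ) ^ k) * ((k : ℝ) * Real.log 2) ^ 2)⁻¹ := by
    refine inv_anti₀ (by positivity) ?_
    show (2:ℝ) ^ k * ((k : ℝ) * Real.log 2) ^ 2 ≤
      (((2:ℕ) ^ k : ℕ) + 2 : ℝ) * Real.log (((2:ℕ) ^ k : ℕ) + 2 : ℝ) ^ 2
    push_cast
    exact mul_le_mul (by linarith) (pow_le_pow_left₀ hklog.le hle 2)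
      (by positivity) (by positivity)
  calc (2:ℝ) ^ k * g (2 ^ k) ≤ (2:ℝ) ^ k * (((2:ℝ) ^ k) * ((k : ℝ) * Real.log 2) ^ 2)⁻¹ :=
        mul_le_mul_of_nonneg_left hgb (by positivity)
    _ = (((k : ℝ) * Real.log 2) ^ 2)⁻¹ := by field_simp
    _ = (Real.log 2)⁻¹ ^ 2 * ((k : ℝ) ^ 2)⁻¹ := by rw [mul_pow]; field_simp
/-- **Computational core of Proposition 3.3 (prop:counter)**: with
`a_ℓ = 1/(ℓ^{s+1/2} log ℓ)` for `ℓ ≥ 2` (indexed here by `ℓ = n + 2`, `n : ℕ`):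
(i) `∑_{ℓ≥2} (1 + ℓ^{2s}) a_ℓ² < ∞`;
(ii) for every `c > 0` the series
`∑_{ℓ≥2} ℓ^{2(s+2+ε)} a_ℓ² (1 + c ℓ(ℓ+1))^{−2}` diverges to `+∞`. -/
theorem counterexample_partial_smoothing (s ε : ℝ) (hs : 1 < s) (hε : 0 < ε)
    (a : ℕ → ℝ)
    (ha : ∀ ℓ : ℕ, 2 ≤ ℓ →
      a ℓ = 1 / ((ℓ : ℝ) ^ (s + 1 / 2) * Real.log ℓ)) :
    (Summable fun n : ℕ => (1 + ((n : ℝ) + 2) ^ (2 * s)) * a (n + 2) ^ 2) ∧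
    ∀ c : ℝ, 0 < c →
      Tendsto
        (fun N : ℕ => ∑ n ∈ Finset.range N,
          ((n : ℝ) + 2) ^ (2 * (s + 2 + ε)) * a (n + 2) ^ 2 *
            (1 + c * ((n : ℝ) + 2) * (((n : ℝ) + 2) + 1))⁻¹ ^ 2)
        atTop atTop := by
  -- basic facts about L = n + 2
  have hL2 : ∀ n : ℕ, (2 : ℝ) ≤ (n : ℝ) + 2 := fun n => by
    have := Nat.cast_nonneg (α := ℝ) n; linarith
  have hLpos : ∀ n : ℕ, (0 : ℝ) < (n : ℝ) + 2 := fun n => lt_of_lt_of_le two_pos (hL2 n)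
  have hlogpos : ∀ n : ℕ, 0 < Real.log ((n : ℝ) + 2) := fun n =>
    Real.log_pos (by linarith [hL2 n])
  -- squared coefficient formula
  have ha2 : ∀ n : ℕ, a (n + 2) ^ 2 =
      (((n : ℝ) + 2) ^ (2 * s + 1) * Real.log ((n : ℝ) + 2) ^ 2)⁻¹ := by
    intro n
    have h := ha (n + 2) (by omega)
    have hcast : ((n + 2 : ℕ) : ℝ) = (n : ℝ) + 2 := by push_cast; ring
    rw [hcast] at h
    rw [h]
    have hpow : (((n : ℝ) + 2) ^ (s + 1 / 2)) ^ 2 = ((n : ℝ) + 2) ^ (2 * s + 1) := by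
      rw [← Real.rpow_natCast (((n : ℝ) + 2) ^ (s + 1 / 2)) 2,
        ← Real.rpow_mul (hLpos n).le]
      norm_num; ring_nf
    rw [div_pow, one_pow, mul_pow, hpow, one_div]
  constructor
  · -- part (i)
    refine summable_of_eventually_le (fun n => ?_) ?_ (bertrand_summable.mul_left 2)
    · have h1 : (0:ℝ) ≤ ((n : ℝ) + 2) ^ (2 * s) := Real.rpow_nonneg (hLpos n).le _
      have := sq_nonneg (a (n + 2))
      nlinarith
    · refine Eventually.of_forall fun n => ?_
      rw [ha2 n]
      set L : ℝ := (n : ℝ) + 2 with hLdef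
      have h1 : (1 : ℝ) ≤ L ^ (2 * s) := by
        calc (1:ℝ) = L ^ (0:ℝ) := (Real.rpow_zero L).symm
          _ ≤ L ^ (2 * s) := Real.rpow_le_rpow_of_exponent_le (by linarith [hL2 n])
              (by linarith)
      have hrw : L ^ (2 * s + 1) = L ^ (2 * s) * L := by
        rw [Real.rpow_add (hLpos n), Real.rpow_one]
      have hLs : (0:ℝ) < L ^ (2 * s) := Real.rpow_pos_of_pos (hLpos n) _
      calc (1 + L ^ (2 * s)) * (L ^ (2 * s + 1) * Real.log L ^ 2)⁻¹
          ≤ (2 * L ^ (2 * s)) * (L ^ (2 * s + 1) * Real.log L ^ 2)⁻¹ := by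
            have : (0:ℝ) < L ^ (2 * s + 1) * Real.log L ^ 2 := by
              have := hlogpos n; positivity
            exact mul_le_mul_of_nonneg_right (by linarith) (inv_pos.mpr this).le
        _ = 2 * (L * Real.log L ^ 2)⁻¹ := by
            rw [hrw]
            have hlog := hlogpos n
            field_simp
  · -- part (ii)
    intro c hc
    have hnonneg : ∀ n : ℕ, 0 ≤ ((n : ℝ) + 2) ^ (2 * (s + 2 + ε)) * a (n + 2) ^ 2 *
        (1 + c * ((n : ℝ) + 2) * (((n : ℝ) + 2) + 1))⁻¹ ^ 2 := by
      intro n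
      have h1 : (0:ℝ) ≤ ((n : ℝ) + 2) ^ (2 * (s + 2 + ε)) := Real.rpow_nonneg (hLpos n).le _
      positivity
    rw [← not_summable_iff_tendsto_nat_atTop_of_nonneg hnonneg]
    intro hS
    -- derive summability of the shifted harmonic series
    have hharm : Summable (fun n : ℕ => ((n : ℝ) + 2)⁻¹) := by
      refine summable_of_eventually_le (fun n => (inv_pos.mpr (hLpos n)).le) ?_ hS
      -- eventual lower bound on the terms
      have hlo : ∀ᶠ x : ℝ in atTop, ‖Real.log x‖ ≤ (1 + 2 * c)⁻¹ * ‖x ^ ε‖ :=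
        (isLittleO_log_rpow_atTop hε).def (by positivity)
      have htend : Tendsto (fun n : ℕ => (n : ℝ) + 2) atTop atTop :=
        tendsto_atTop_add_const_right atTop 2 tendsto_natCast_atTop_atTop
      filter_upwards [htend.eventually hlo] with n hn
      set L : ℝ := (n : ℝ) + 2 with hLdef
      have hL1 : (1:ℝ) ≤ L := by linarith [hL2 n]
      have hLp : (0:ℝ) < L := hLpos n
      have hlogp : (0:ℝ) < Real.log L := hlogpos n
      have hLe : (0:ℝ) < L ^ ε := Real.rpow_pos_of_pos hLp ε
      have hkey : (1 + 2 * c) * Real.log L ≤ L ^ ε := by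
        rw [Real.norm_eq_abs, Real.norm_eq_abs, abs_of_pos hlogp, abs_of_pos hLe] at hn
        have h12c : (0:ℝ) < 1 + 2 * c := by linarith
        rw [inv_mul_eq_div, le_div_iff₀ h12c] at hn
        linarith [hn]
      -- bound the denominator
      have hden : 1 + c * L * (L + 1) ≤ (1 + 2 * c) * L ^ 2 := by
        nlinarith [mul_nonneg (mul_nonneg hc.le (sub_nonneg.2 hL1)) hLp.le,
          mul_nonneg (sub_nonneg.2 hL1) (by linarith : (0:ℝ) ≤ L + 1)]
      have hdpos : (0:ℝ) < 1 + c * L * (L + 1) := by nlinarith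
      have hinv : ((1 + 2 * c) * L ^ 2)⁻¹ ^ 2 ≤ (1 + c * L * (L + 1))⁻¹ ^ 2 :=
        pow_le_pow_left₀ (by positivity) (inv_anti₀ hdpos hden) 2
      rw [ha2 n]
      have hstep : L ^ (2 * (s + 2 + ε)) * (L ^ (2 * s + 1) * Real.log L ^ 2)⁻¹ *
            (((1 + 2 * c) * L ^ 2)⁻¹) ^ 2
          ≤ L ^ (2 * (s + 2 + ε)) * (L ^ (2 * s + 1) * Real.log L ^ 2)⁻¹ *
            ((1 + c * L * (L + 1))⁻¹) ^ 2 := by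
        refine mul_le_mul_of_nonneg_left hinv ?_
        have h1 : (0:ℝ) ≤ L ^ (2 * (s + 2 + ε)) := Real.rpow_nonneg hLp.le _
        have h2 : (0:ℝ) < L ^ (2 * s + 1) := Real.rpow_pos_of_pos hLp _
        positivity
      refine le_trans ?_ hstep
      -- main computation: L⁻¹ ≤ L^{2(s+2+ε)} / (L^{2s+1} log²L ((1+2c)L²)²)
      have hexp : L ^ (2 * (s + 2 + ε)) = L ^ (2 * s + 1) * L ^ (3:ℝ) * (L ^ ε) ^ 2 := by
        rw [← Real.rpow_natCast (L ^ ε) 2, ← Real.rpow_mul hLp.le,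
          ← Real.rpow_add hLp, ← Real.rpow_add hLp]
        norm_num; ring_nf
      have hL3 : L ^ (3:ℝ) = L ^ (3:ℕ) := by
        rw [show ((3:ℝ)) = ((3:ℕ):ℝ) by norm_num, Real.rpow_natCast]
      have hD : (0:ℝ) < L ^ (2 * s + 1) * Real.log L ^ 2 * ((1 + 2 * c) * L ^ 2) ^ 2 := by
        have h2 : (0:ℝ) < L ^ (2 * s + 1) := Real.rpow_pos_of_pos hLp _
        have : (0:ℝ) < 1 + 2 * c := by linarith
        positivity
      rw [inv_pow, mul_assoc, ← mul_inv, ← div_eq_mul_inv, le_div_iff₀ hD]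
      rw [hexp, hL3]
      have hsq : ((1 + 2 * c) * Real.log L) ^ 2 ≤ (L ^ ε) ^ 2 := by
        refine pow_le_pow_left₀ ?_ hkey 2
        have : (0:ℝ) < 1 + 2 * c := by linarith
        positivity
      have hLne : L ≠ 0 := hLp.ne'
      have heq : L⁻¹ * (L ^ (2 * s + 1) * Real.log L ^ 2 * ((1 + 2 * c) * L ^ 2) ^ 2)
          = L ^ (2 * s + 1) * L ^ (3:ℕ) * ((1 + 2 * c) * Real.log L) ^ 2 := by
        field_simp
      rw [heq]
      have h2 : (0:ℝ) < L ^ (2 * s + 1) := Real.rpow_pos_of_pos hLp _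
      have h3 : (0:ℝ) < L ^ (3:ℕ) := by positivity
      calc L ^ (2 * s + 1) * L ^ (3:ℕ) * ((1 + 2 * c) * Real.log L) ^ 2
          ≤ L ^ (2 * s + 1) * L ^ (3:ℕ) * (L ^ ε) ^ 2 :=
            mul_le_mul_of_nonneg_left hsq (by positivity)
        _ = L ^ (2 * s + 1) * L ^ (3:ℕ) * (L ^ ε) ^ 2 := rfl
    -- contradiction with the harmonic series
    have : Summable (fun n : ℕ => 1 / ((n : ℝ))) := by
      rw [← summable_nat_add_iff 2]
      refine hharm.congr fun n => ?_
      push_cast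
      rw [one_div]
    exact Real.not_summable_one_div_natCast this
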